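/- Let A ⊆ {1,…,m} with |A| ≥ ηm, and suppose S satisfies the BRIP condition with parameters (η, ε) where ε < 1/7. Let w_{t+1} = argmin_w { ⟨∇p̃^{A}(w_t), w − w_t⟩ + λh(w) + (1/(2α))‖w − w_t‖² } be one encoded proximal gradient step from any point w_t, with step size 0 < α < 1/M. Then f(w_{t+1}) ≤ ((1+7ε)/(1−3ε)) · f(w_t). -/

import Mathlib

open Matrix Finset

noncomputable section

namespace Stmt5

/-- `p(w) = (1/2)‖Xw − y‖²`. -/
def pObj {n p : ℕ} (X : Matrix (Fin n) (Fin p) ℝ) (y : Fin n → ℝ)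
    (w : Fin p → ℝ) : ℝ :=
  (1 / 2) * ((X *ᵥ w - y) ⬝ᵥ (X *ᵥ w - y))

/-- The original objective `f(w) = p(w) + λ h(w)`. -/
def objF {n p : ℕ} (X : Matrix (Fin n) (Fin p) ℝ) (y : Fin n → ℝ) (lam : ℝ)
    (h : (Fin p → ℝ) → ℝ) (w : Fin p → ℝ) : ℝ :=
  pObj X y w + lam * h w

/-- `‖S_A z‖² = ∑_{i ∈ A} ‖S_i z‖²`, the quadratic form of `S_Aᵀ S_A`. -/
def encSq {n r m : ℕ} (S : Fin m → Matrix (Fin r) (Fin n) ℝ) (A : Finset (Fin m))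
    (z : Fin n → ℝ) : ℝ :=
  ∑ i ∈ A, (S i *ᵥ z) ⬝ᵥ (S i *ᵥ z)

/-- Gradient of `p̃^A(w) = (1/2)‖S_A(Xw − y)‖²`, namely `Xᵀ S_Aᵀ S_A (Xw − y)`. -/
def gradPTilde {n p r m : ℕ} (X : Matrix (Fin n) (Fin p) ℝ) (y : Fin n → ℝ)
    (S : Fin m → Matrix (Fin r) (Fin n) ℝ) (A : Finset (Fin m)) (w : Fin p → ℝ) :
    Fin p → ℝ :=
  Xᵀ *ᵥ (∑ i ∈ A, (S i)ᵀ *ᵥ (S i *ᵥ (X *ᵥ w - y)))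

/-- The proximal subproblem objective
`⟨∇p̃^A(wₜ), v − wₜ⟩ + λ h(v) + (1/(2α))‖v − wₜ‖²`. -/
def proxObj {n p r m : ℕ} (X : Matrix (Fin n) (Fin p) ℝ) (y : Fin n → ℝ)
    (S : Fin m → Matrix (Fin r) (Fin n) ℝ) (lam α : ℝ) (h : (Fin p → ℝ) → ℝ)
    (A : Finset (Fin m)) (wt v : Fin p → ℝ) : ℝ :=
  gradPTilde X y S A wt ⬝ᵥ (v - wt) + lam * h v +
    (1 / (2 * α)) * ((v - wt) ⬝ᵥ (v - wt))

/-! Write `e = X wₜ - y`, `Δ = w_{t+1} - wₜ` and `b = X Δ`. Comparing `w_{t+1}` with the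
competitor `v = wₜ` in the proximal subproblem gives
`⟨S_A e, S_A b⟩ + λ h(w_{t+1}) + ‖Δ‖²/(2α) ≤ λ h(wₜ)`, and `α < 1/M` gives
`‖b‖²/2 ≤ ‖Δ‖²/(2α)`. Polarizing the BRIP bounds for `S_Aᵀ S_A` controls the gradient error,
`⟨e, b⟩ - ⟨S_A e, S_A b⟩ ≤ (ε/2)(‖e‖² + ‖b‖²)`, so
`f(w_{t+1}) ≤ f(wₜ) + (ε/2)(‖e‖² + ‖b‖²)`. Finally `‖e‖² ≤ 2 f(wₜ)` and
`‖b‖² ≤ 2‖e + b‖² + 2‖e‖² ≤ 4 f(w_{t+1}) + 2‖e‖²`, which rearrange to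
`(1 - 2ε) f(w_{t+1}) ≤ (1 + 3ε) f(wₜ)`. -/

section DotProduct

variable {ι : Type*} [Fintype ι]

lemma dotProduct_self_nonneg_real (v : ι → ℝ) : 0 ≤ v ⬝ᵥ v :=
  Finset.sum_nonneg fun i _ => mul_self_nonneg (v i)

lemma add_dotProduct_add_self (u v : ι → ℝ) :
    (u + v) ⬝ᵥ (u + v) = u ⬝ᵥ u + 2 * (u ⬝ᵥ v) + v ⬝ᵥ v := by
  simp only [dotProduct_add, add_dotProduct, dotProduct_comm v u]
  ring

lemma sub_dotProduct_sub_self (u v : ι → ℝ) :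
    (u - v) ⬝ᵥ (u - v) = u ⬝ᵥ u - 2 * (u ⬝ᵥ v) + v ⬝ᵥ v := by
  simp only [dotProduct_sub, sub_dotProduct, dotProduct_comm v u]
  ring

lemma dotProduct_self_le_two_mul_add (u v : ι → ℝ) :
    v ⬝ᵥ v ≤ 2 * ((u + v) ⬝ᵥ (u + v)) + 2 * (u ⬝ᵥ u) := by
  have h := dotProduct_self_nonneg_real (u + u + v)
  rw [add_dotProduct_add_self (u + u), add_dotProduct_add_self, add_dotProduct] at h
  rw [add_dotProduct_add_self]
  linarith

lemma dotProduct_mulVec_add_sub_sub {G : Matrix ι ι ℝ} (hG : Gᵀ = G) (u v : ι → ℝ) :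
    (u + v) ⬝ᵥ (G *ᵥ (u + v)) - (u - v) ⬝ᵥ (G *ᵥ (u - v)) = 4 * (u ⬝ᵥ (G *ᵥ v)) := by
  have hsymm : v ⬝ᵥ (G *ᵥ u) = u ⬝ᵥ (G *ᵥ v) := by
    rw [← dotProduct_transpose_mulVec, hG]
  simp only [mulVec_add, mulVec_sub, dotProduct_add, dotProduct_sub, add_dotProduct,
    sub_dotProduct, hsymm]
  ring

lemma sub_dotProduct_mulVec_le {G : Matrix ι ι ℝ} (hG : Gᵀ = G) {ε : ℝ}
    (hG_ge : ∀ z, (1 - ε) * (z ⬝ᵥ z) ≤ z ⬝ᵥ (G *ᵥ z))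
    (hG_le : ∀ z, z ⬝ᵥ (G *ᵥ z) ≤ (1 + ε) * (z ⬝ᵥ z)) (u v : ι → ℝ) :
    u ⬝ᵥ v - u ⬝ᵥ (G *ᵥ v) ≤ ε / 2 * (u ⬝ᵥ u + v ⬝ᵥ v) := by
  have hadd := hG_ge (u + v)
  have hsub := hG_le (u - v)
  have hpolar := dotProduct_mulVec_add_sub_sub hG u v
  rw [add_dotProduct_add_self] at hadd
  rw [sub_dotProduct_sub_self] at hsub
  linarith

lemma mul_mulVec_dotProduct_le {κ : Type*} [Fintype κ] {X : Matrix κ ι ℝ} {M α : ℝ}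
    (hM : ∀ v, (X *ᵥ v) ⬝ᵥ (X *ᵥ v) ≤ M * (v ⬝ᵥ v)) (hα0 : 0 < α) (hα : α < 1 / M)
    (v : ι → ℝ) : α * ((X *ᵥ v) ⬝ᵥ (X *ᵥ v)) ≤ v ⬝ᵥ v := by
  have hM0 : 0 < M := one_div_pos.mp (hα0.trans hα)
  have hαM : α * M < 1 := (lt_div_iff₀ hM0).mp (by rwa [one_div] at hα ⊢)
  calc α * ((X *ᵥ v) ⬝ᵥ (X *ᵥ v)) ≤ α * (M * (v ⬝ᵥ v)) := by gcongr; exact hM v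
    _ = (α * M) * (v ⬝ᵥ v) := by ring
    _ ≤ v ⬝ᵥ v := mul_le_of_le_one_left (dotProduct_self_nonneg_real v) hαM.le

end DotProduct

def encGram {n r m : ℕ} (S : Fin m → Matrix (Fin r) (Fin n) ℝ) (A : Finset (Fin m)) :
    Matrix (Fin n) (Fin n) ℝ :=
  ∑ i ∈ A, (S i)ᵀ * S i

section Encoded

variable {n p r m : ℕ} (X : Matrix (Fin n) (Fin p) ℝ) (y : Fin n → ℝ)
  (S : Fin m → Matrix (Fin r) (Fin n) ℝ) (A : Finset (Fin m))

lemma transpose_encGram : (encGram S A)ᵀ = encGram S A := by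
  simp [encGram, transpose_sum, transpose_mul]

lemma encGram_mulVec (z : Fin n → ℝ) :
    encGram S A *ᵥ z = ∑ i ∈ A, (S i)ᵀ *ᵥ (S i *ᵥ z) := by
  simp only [encGram, sum_mulVec, mulVec_mulVec]

lemma encSq_eq_dotProduct_encGram (z : Fin n → ℝ) :
    encSq S A z = z ⬝ᵥ (encGram S A *ᵥ z) := by
  simp only [encSq, encGram_mulVec, dotProduct_sum, dotProduct_transpose_mulVec]

lemma gradPTilde_dotProduct (w v : Fin p → ℝ) :
    gradPTilde X y S A w ⬝ᵥ v = (X *ᵥ w - y) ⬝ᵥ (encGram S A *ᵥ (X *ᵥ v)) := by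
  rw [gradPTilde, ← encGram_mulVec, dotProduct_comm, dotProduct_transpose_mulVec,
    dotProduct_comm, ← dotProduct_transpose_mulVec, transpose_encGram]

lemma proxObj_self (lam α : ℝ) (h : (Fin p → ℝ) → ℝ) (w : Fin p → ℝ) :
    proxObj X y S lam α h A w w = lam * h w := by
  simp [proxObj]

lemma mulVec_sub_eq_add_mulVec_sub (w w' : Fin p → ℝ) :
    X *ᵥ w' - y = (X *ᵥ w - y) + X *ᵥ (w' - w) := by
  rw [mulVec_sub]; abel

lemma half_dotProduct_le_objF {lam : ℝ} {h : (Fin p → ℝ) → ℝ} (hlam : 0 ≤ lam)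
    (hh : ∀ v, 0 ≤ h v) (w : Fin p → ℝ) :
    1 / 2 * ((X *ᵥ w - y) ⬝ᵥ (X *ᵥ w - y)) ≤ objF X y lam h w :=
  le_add_of_nonneg_right (mul_nonneg hlam (hh w))

lemma objF_le_add_of_proxObj_le_self {ε lam M α : ℝ} {h : (Fin p → ℝ) → ℝ}
    {wt wnext : Fin p → ℝ}
    (hA_ge : ∀ z, (1 - ε) * (z ⬝ᵥ z) ≤ encSq S A z)
    (hA_le : ∀ z, encSq S A z ≤ (1 + ε) * (z ⬝ᵥ z))
    (hM : ∀ v, (X *ᵥ v) ⬝ᵥ (X *ᵥ v) ≤ M * (v ⬝ᵥ v)) (hα0 : 0 < α) (hα : α < 1 / M)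
    (hstep : proxObj X y S lam α h A wt wnext ≤ proxObj X y S lam α h A wt wt) :
    objF X y lam h wnext ≤ objF X y lam h wt + ε / 2 *
      ((X *ᵥ wt - y) ⬝ᵥ (X *ᵥ wt - y) + (X *ᵥ (wnext - wt)) ⬝ᵥ (X *ᵥ (wnext - wt))) := by
  set e := X *ᵥ wt - y
  set b := X *ᵥ (wnext - wt)
  have hprox : e ⬝ᵥ (encGram S A *ᵥ b) + lam * h wnext +
      1 / (2 * α) * ((wnext - wt) ⬝ᵥ (wnext - wt)) ≤ lam * h wt := by
    rwa [proxObj_self, proxObj, gradPTilde_dotProduct] at hstep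
  have hpolar : e ⬝ᵥ b - e ⬝ᵥ (encGram S A *ᵥ b) ≤ ε / 2 * (e ⬝ᵥ e + b ⬝ᵥ b) :=
    sub_dotProduct_mulVec_le (transpose_encGram S A)
      (fun z => encSq_eq_dotProduct_encGram S A z ▸ hA_ge z)
      (fun z => encSq_eq_dotProduct_encGram S A z ▸ hA_le z) e b
  have hcurv : 1 / 2 * (b ⬝ᵥ b) ≤ 1 / (2 * α) * ((wnext - wt) ⬝ᵥ (wnext - wt)) :=
    calc 1 / 2 * (b ⬝ᵥ b) = 1 / (2 * α) * (α * (b ⬝ᵥ b)) := by field_simp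
      _ ≤ 1 / (2 * α) * ((wnext - wt) ⬝ᵥ (wnext - wt)) := by
        gcongr; exact mul_mulVec_dotProduct_le hM hα0 hα (wnext - wt)
  rw [objF, pObj, mulVec_sub_eq_add_mulVec_sub X y wt wnext, add_dotProduct_add_self, objF,
    pObj]
  linarith

end Encoded

lemma le_div_mul_of_le_add_mul {ε a b F f : ℝ} (hε0 : 0 ≤ ε) (hε : 3 * ε < 1) (ha0 : 0 ≤ a)
    (ha : a ≤ 2 * f) (hb : b ≤ 4 * F + 2 * a) (hF : F ≤ f + ε / 2 * (a + b)) :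
    F ≤ (1 + 7 * ε) / (1 - 3 * ε) * f := by
  have hlin : (1 - 2 * ε) * F ≤ (1 + 3 * ε) * f := by
    nlinarith [mul_le_mul_of_nonneg_left hb hε0, mul_le_mul_of_nonneg_left ha hε0]
  rw [div_mul_eq_mul_div, le_div_iff₀ (by linarith)]
  rcases le_or_gt 0 F with hF0 | hF0
  · nlinarith
  · nlinarith

theorem encoded_proximal_gradient_one_step_general
    {n p r m : ℕ}
    (X : Matrix (Fin n) (Fin p) ℝ) (y : Fin n → ℝ)
    (S : Fin m → Matrix (Fin r) (Fin n) ℝ)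
    (η ε lam M α : ℝ)
    (h : (Fin p → ℝ) → ℝ)
    (A : Finset (Fin m)) (wt wnext : Fin p → ℝ)
    -- BRIP parameters
    (hε0 : 0 < ε) (hε : ε < 1 / 7)
    -- BRIP condition
    (hBRIP : ∀ B : Finset (Fin m), η * m ≤ (B.card : ℝ) →
      ∀ z : Fin n → ℝ,
        (1 - ε) * (z ⬝ᵥ z) ≤ encSq S B z ∧ encSq S B z ≤ (1 + ε) * (z ⬝ᵥ z))
    (hA : η * m ≤ ((A.card : ℕ) : ℝ))
    -- M is (an upper bound for) the largest eigenvalue of XᵀX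
    (hM : ∀ v : Fin p → ℝ, (X *ᵥ v) ⬝ᵥ (X *ᵥ v) ≤ M * (v ⬝ᵥ v))
    -- h is convex and nonnegative (possibly non-smooth), λ ≥ 0
    (hlam : 0 ≤ lam) (hh : ∀ v, 0 ≤ h v)
    -- step size 0 < α < 1/M
    (hα0 : 0 < α) (hα : α < 1 / M)
    -- w_{t+1} minimizes the proximal subproblem at w_t
    (hstep : ∀ v : Fin p → ℝ,
      proxObj X y S lam α h A wt wnext ≤ proxObj X y S lam α h A wt v) :
    objF X y lam h wnext ≤ ((1 + 7 * ε) / (1 - 3 * ε)) * objF X y lam h wt := by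
  have hdesc := objF_le_add_of_proxObj_le_self X y S A (fun z => (hBRIP A hA z).1)
    (fun z => (hBRIP A hA z).2) hM hα0 hα (hstep wt)
  have hf := half_dotProduct_le_objF X y hlam hh wt
  have hF := half_dotProduct_le_objF X y hlam hh wnext
  rw [mulVec_sub_eq_add_mulVec_sub X y wt wnext] at hF
  exact le_div_mul_of_le_add_mul hε0.le (by linarith) (dotProduct_self_nonneg_real _)
    (by linarith) (by linarith [dotProduct_self_le_two_mul_add (X *ᵥ wt - y) (X *ᵥ (wnext - wt))])
    hdesc

/-- Theorem 3(2): one encoded proximal gradient step cannot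
increase the objective by more than a factor `(1+7ε)/(1−3ε)`. -/
theorem encoded_proximal_gradient_one_step
    {n p r m : ℕ}
    (X : Matrix (Fin n) (Fin p) ℝ) (y : Fin n → ℝ)
    (S : Fin m → Matrix (Fin r) (Fin n) ℝ)
    (η ε lam M α : ℝ)
    (h : (Fin p → ℝ) → ℝ)
    (A : Finset (Fin m)) (wt wnext : Fin p → ℝ)
    -- BRIP parameters
    (hη0 : 0 < η) (hη1 : η ≤ 1) (hε0 : 0 < ε) (hε : ε < 1 / 7)
    -- BRIP condition
    (hBRIP : ∀ B : Finset (Fin m), η * m ≤ (B.card : ℝ) →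
      ∀ z : Fin n → ℝ,
        (1 - ε) * (z ⬝ᵥ z) ≤ encSq S B z ∧ encSq S B z ≤ (1 + ε) * (z ⬝ᵥ z))
    (hA : η * m ≤ ((A.card : ℕ) : ℝ))
    -- M is (an upper bound for) the largest eigenvalue of XᵀX
    (hM : ∀ v : Fin p → ℝ, (X *ᵥ v) ⬝ᵥ (X *ᵥ v) ≤ M * (v ⬝ᵥ v))
    -- h is convex and nonnegative (possibly non-smooth), λ ≥ 0
    (hlam : 0 ≤ lam) (hh : ∀ v, 0 ≤ h v)
    (hconv : ConvexOn ℝ Set.univ h)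
    -- step size 0 < α < 1/M
    (hα0 : 0 < α) (hα : α < 1 / M)
    -- w_{t+1} minimizes the proximal subproblem at w_t
    (hstep : ∀ v : Fin p → ℝ,
      proxObj X y S lam α h A wt wnext ≤ proxObj X y S lam α h A wt v) :
    objF X y lam h wnext ≤ ((1 + 7 * ε) / (1 - 3 * ε)) * objF X y lam h wt :=
  encoded_proximal_gradient_one_step_general X y S η ε lam M α h A wt wnext hε0 hε hBRIP hA hM hlam
    hh hα0 hα hstep

end Stmt5
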